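/- Let K > 0, let a, b, c be nonnegative reals and A ∈ [0, π] be such that cosh(√K · a) = cosh(√K · b) · cosh(√K · c) − sinh(√K · b) · sinh(√K · c) · cos A, and assume b ≤ 1/(4√K). Let ā ≥ 0 be defined by ā² = b² + c² − 2 b c cos A. Then ā² ≤ a² ≤ (1 + 2 K b²) ā². -/

import Mathlib

/-!
After rescaling to curvature `-1`, put `θ = (1 - cos A) / 2 ∈ [0, 1]`. The two laws of cosines read
`cosh a = (1 - θ) cosh (c - b) + θ cosh (b + c)` and `ā² = (1 - θ) (c - b)² + θ (b + c)²`, so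
everything is about the function `s ↦ cosh √s`, which is convex on `[0, ∞)` because its derivative
`sinh √s / (2 √s)` is monotone. The chord inequality gives `cosh ā ≤ cosh a`.

For the upper bound `a ≤ μ ā` with `μ = √(1 + 2 b²)`, bound `cosh (μ ā)` below by the tangent
line of `s ↦ cosh (μ √s)` at `s = (c - b)²`. Both sides of the resulting inequality are affine in
`θ`; at `θ = 0` it is `cosh |c - b| ≤ cosh (μ |c - b|)`, and at `θ = 1` (the degenerate triangle)
it is an explicit inequality between hyperbolic functions of `b` and `c`, which holds for `b ≤ 1/2`.
-/

open Real Set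

lemma nonneg_of_hasDerivAt_of_nonneg {f f' : ℝ → ℝ} (hf : ∀ x, HasDerivAt f (f' x) x)
    (hf' : ∀ x, 0 < x → 0 ≤ f' x) (h0 : f 0 = 0) {x : ℝ} (hx : 0 ≤ x) : 0 ≤ f x := by
  have hmono : MonotoneOn f (Ici 0) :=
    monotoneOn_of_hasDerivWithinAt_nonneg (convex_Ici 0)
      (HasDerivAt.continuousOn fun x _ ↦ hf x) (fun x _ ↦ (hf x).hasDerivWithinAt)
      (fun x hx ↦ hf' x (by simpa using hx))
  exact h0 ▸ hmono self_mem_Ici hx hx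

lemma sinh_le_mul_cosh {x : ℝ} (hx : 0 ≤ x) : sinh x ≤ x * cosh x := by
  have hf : ∀ y, HasDerivAt (fun y ↦ y * cosh y - sinh y) (y * sinh y) y := fun y ↦
    (((hasDerivAt_id y).mul (hasDerivAt_cosh y)).sub (hasDerivAt_sinh y)).congr_deriv (by simp)
  have := nonneg_of_hasDerivAt_of_nonneg hf
    (fun y hy ↦ mul_nonneg hy.le (sinh_nonneg_iff.2 hy.le)) (by simp) hx
  linarith

lemma three_mul_mul_cosh_le_mul_sinh {x : ℝ} (hx : 0 ≤ x) :
    3 * x * cosh x ≤ (3 + x ^ 2) * sinh x := by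
  have hf : ∀ y, HasDerivAt (fun y ↦ (3 + y ^ 2) * sinh y - 3 * y * cosh y)
      (y * (y * cosh y - sinh y)) y := fun y ↦ by
    have h := ((((hasDerivAt_pow 2 y).const_add 3).mul (hasDerivAt_sinh y)).sub
      (((hasDerivAt_id y).const_mul 3).mul (hasDerivAt_cosh y)))
    exact h.congr_deriv (by simp only [id, mul_one]; ring)
  have := nonneg_of_hasDerivAt_of_nonneg hf
    (fun y hy ↦ mul_nonneg hy.le (sub_nonneg.2 (sinh_le_mul_cosh hy.le))) (by simp) hx
  linarith

lemma mul_sinh_le_mul_sinh {x y : ℝ} (hx : 0 ≤ x) (hxy : x ≤ y) :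
    y * sinh x ≤ x * sinh y := by
  have hadd : sinh y = sinh x * cosh (y - x) + cosh x * sinh (y - x) := by
    rw [← sinh_add, add_sub_cancel]
  have h1 : 1 ≤ cosh (y - x) := one_le_cosh _
  have h2 : y - x ≤ sinh (y - x) := self_le_sinh_iff.2 (sub_nonneg.2 hxy)
  have h3 : 0 ≤ sinh x := sinh_nonneg_iff.2 hx
  have h4 := sinh_le_mul_cosh hx
  nlinarith [mul_nonneg (mul_nonneg hx h3) (sub_nonneg.2 h1),
    mul_nonneg (mul_nonneg hx (cosh_pos x).le) (sub_nonneg.2 h2),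
    mul_nonneg (sub_nonneg.2 hxy) (sub_nonneg.2 h4)]

lemma one_add_sq_div_two_le_cosh (x : ℝ) : 1 + x ^ 2 / 2 ≤ cosh x := by
  have h : cosh x = 1 + 2 * sinh (x / 2) ^ 2 := by
    have := cosh_two_mul (x / 2)
    rw [mul_div_cancel₀ x two_ne_zero, cosh_sq'] at this
    linarith
  have hs : |x / 2| ≤ |sinh (x / 2)| := by
    rw [abs_sinh]; exact self_le_sinh_iff.2 (abs_nonneg _)
  nlinarith [sq_le_sq.2 hs]

lemma sinh_le_add_of_le_one {y : ℝ} (h0 : 0 ≤ y) (h1 : y ≤ 1) :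
    sinh y ≤ y + 2 / 9 * y ^ 3 := by
  have hpos := Real.exp_bound (x := y) (by rwa [abs_of_nonneg h0]) (n := 3) (by norm_num)
  have hneg := Real.exp_bound (x := -y) (by rwa [abs_neg, abs_of_nonneg h0]) (n := 3) (by norm_num)
  rw [abs_of_nonneg h0] at hpos
  rw [abs_neg, abs_of_nonneg h0] at hneg
  simp only [Finset.sum_range_succ, Finset.sum_range_zero] at hpos hneg
  norm_num [Nat.factorial] at hpos hneg
  rw [sinh_eq]
  linarith [(abs_sub_le_iff.1 hpos).1, (abs_sub_le_iff.1 hneg).2]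

lemma sinh_mul_cosh_le {x μ : ℝ} (h0 : 0 ≤ x) (h1 : x ≤ 1 / 2) (hμ0 : 0 ≤ μ)
    (hμ : 1 + 2 * x ^ 2 ≤ μ ^ 2) : sinh x * cosh x ≤ μ * x := by
  have h2 : sinh (2 * x) = 2 * sinh x * cosh x := sinh_two_mul x
  have h3 := sinh_le_add_of_le_one (y := 2 * x) (by linarith) (by linarith)
  have h4 : 1 + 8 / 9 * x ^ 2 ≤ μ := by
    apply abs_le_of_sq_le_sq' _ hμ0 |>.2
    nlinarith [mul_le_mul_of_nonneg_left (show x ^ 2 ≤ 1 / 4 by nlinarith) (sq_nonneg x)]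
  nlinarith [mul_le_mul_of_nonneg_right h4 h0]

lemma sinh_le_mul {x μ : ℝ} (h0 : 0 ≤ x) (h1 : x ≤ 1 / 2) (hμ0 : 0 ≤ μ)
    (hμ : 1 + 2 * x ^ 2 ≤ μ ^ 2) : sinh x ≤ μ * x :=
  le_trans (le_mul_of_one_le_right (sinh_nonneg_iff.2 h0) (one_le_cosh x))
    (sinh_mul_cosh_le h0 h1 hμ0 hμ)

lemma hasDerivAt_cosh_sqrt {s : ℝ} (hs : 0 < s) :
    HasDerivAt (fun s ↦ cosh √s) (sinh √s / (2 * √s)) s := by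
  have := (hasDerivAt_sqrt hs.ne').cosh
  exact this.congr_deriv (by ring)

lemma convexOn_cosh_sqrt : ConvexOn ℝ (Ici 0) (fun s ↦ cosh √s) := by
  refine MonotoneOn.convexOn_of_deriv (convex_Ici 0)
    (continuous_cosh.comp continuous_sqrt).continuousOn ?_ ?_ <;> rw [interior_Ici]
  · exact fun s hs ↦ (hasDerivAt_cosh_sqrt hs).differentiableAt.differentiableWithinAt
  · intro s hs t ht hst
    have hs' : 0 < √s := sqrt_pos.2 hs
    have ht' : 0 < √t := sqrt_pos.2 ht
    rw [(hasDerivAt_cosh_sqrt hs).deriv, (hasDerivAt_cosh_sqrt ht).deriv,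
      div_le_div_iff₀ (by positivity) (by positivity)]
    nlinarith [mul_sinh_le_mul_sinh hs'.le (sqrt_le_sqrt hst)]

lemma sq_sub_sq_mul_sinh_le {y₀ y : ℝ} (hy₀ : 0 < y₀) (hy : y₀ ^ 2 ≤ y ^ 2) :
    (y ^ 2 - y₀ ^ 2) * sinh y₀ ≤ 2 * y₀ * (cosh y - cosh y₀) := by
  rcases hy.eq_or_lt with heq | hlt
  · have : cosh y₀ ≤ cosh y := cosh_le_cosh.2 (sq_le_sq.1 hy)
    rw [heq, sub_self, zero_mul]
    nlinarith
  · have h := convexOn_cosh_sqrt.le_slope_of_hasDerivAt (sq_nonneg y₀) (sq_nonneg y) hlt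
      (hasDerivAt_cosh_sqrt (by positivity))
    rw [slope_def_field, sqrt_sq hy₀.le, sqrt_sq_eq_abs, cosh_abs,
      div_le_div_iff₀ (by positivity) (sub_pos.2 hlt)] at h
    linarith

lemma sq_le_sq_of_cosh_eq_convex_combination {a ā x y θ : ℝ} (hθ0 : 0 ≤ θ) (hθ1 : θ ≤ 1)
    (ha : cosh a = (1 - θ) * cosh x + θ * cosh y)
    (hā : ā ^ 2 = (1 - θ) * x ^ 2 + θ * y ^ 2) : ā ^ 2 ≤ a ^ 2 := by
  have h := convexOn_cosh_sqrt.2 (sq_nonneg x) (sq_nonneg y) (sub_nonneg.2 hθ1) hθ0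
    (sub_add_cancel 1 θ)
  simp only [smul_eq_mul, ← hā, sqrt_sq_eq_abs, cosh_abs, ← ha] at h
  exact sq_le_sq.2 (cosh_le_cosh.1 h)

section Distortion

variable {b c μ : ℝ}

lemma sub_mul_cosh_add_le_of_le (hc : 0 ≤ c) (hcb : c ≤ b) (hb : b ≤ 1 / 2) (hμ0 : 0 ≤ μ)
    (hμ : μ ^ 2 = 1 + 2 * b ^ 2) :
    (b - c) * cosh (b + c)
      ≤ (b - c) * cosh (μ * (b - c)) + 2 * μ * b * c * sinh (μ * (b - c)) := by
  have hμ1 : 1 ≤ μ := by nlinarith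
  have hd : 0 ≤ b - c := sub_nonneg.2 hcb
  have hsum : cosh (b + c) = cosh (b - c) + 2 * sinh b * sinh c := by
    rw [cosh_add, cosh_sub]; ring
  have hmono : cosh (b - c) ≤ cosh (μ * (b - c)) := by
    rw [cosh_le_cosh, abs_of_nonneg hd, abs_of_nonneg (by positivity)]
    exact le_mul_of_one_le_left hd hμ1
  have hsb : sinh b ≤ μ * b := sinh_le_mul (hc.trans hcb) hb hμ0 (by linarith)
  have hsc : sinh c ≤ μ * c := sinh_le_mul hc (hcb.trans hb) hμ0 (by nlinarith)
  have hss : sinh b * sinh c ≤ μ * b * (μ * c) :=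
    mul_le_mul hsb hsc (sinh_nonneg_iff.2 hc) (by nlinarith)
  have hlin : μ * (b - c) ≤ sinh (μ * (b - c)) := self_le_sinh_iff.2 (by positivity)
  have hbc : 0 ≤ μ * b * c := by have := hc.trans hcb; positivity
  rw [hsum]
  nlinarith [mul_le_mul_of_nonneg_left hss hd, mul_le_mul_of_nonneg_left hlin hbc,
    mul_le_mul_of_nonneg_left hmono hd]

lemma sub_mul_cosh_add_le_of_ge (hb0 : 0 ≤ b) (hb : b ≤ 1 / 2) (hbc : b ≤ c) (hμ0 : 0 ≤ μ)
    (hμ : μ ^ 2 = 1 + 2 * b ^ 2) :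
    (c - b) * cosh (b + c)
      ≤ (c - b) * cosh (μ * (c - b)) + 2 * μ * b * c * sinh (μ * (c - b)) := by
  obtain ⟨d, hd, rfl⟩ : ∃ d, 0 ≤ d ∧ c = b + d := ⟨c - b, sub_nonneg.2 hbc, by ring⟩
  rw [add_sub_cancel_left]
  have hμ1 : 1 ≤ μ := by nlinarith
  have hμb : b ^ 2 ≤ μ * (μ - 1) := by nlinarith
  have hμb' : 2 / 3 * b ^ 2 ≤ μ - 1 := by
    have hμ32 : μ ≤ 3 / 2 := by nlinarith
    nlinarith [mul_le_mul_of_nonneg_left hμ32 (sub_nonneg.2 hμ1)]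
  set ε := (μ - 1) * d with hε
  have hε0 : 0 ≤ ε := by positivity
  have hμd : μ * d = d + ε := by ring
  have hS := sinh_nonneg_iff.2 hd
  have hC := cosh_pos d
  have hcosh : cosh d + ε * sinh d ≤ cosh (μ * d) := by
    rw [hμd, cosh_add]
    nlinarith [one_le_cosh ε, self_le_sinh_iff.2 hε0]
  have hsinh : sinh d + ε * cosh d ≤ sinh (μ * d) := by
    rw [hμd, sinh_add]
    nlinarith [one_le_cosh ε, self_le_sinh_iff.2 hε0]
  have hsc : sinh b * cosh b ≤ μ * b := sinh_mul_cosh_le hb0 hb hμ0 hμ.ge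
  have hsq : sinh b ^ 2 ≤ b ^ 2 + b ^ 4 := by
    have h : sinh b ^ 2 * (1 + sinh b ^ 2) ≤ b ^ 2 + 2 * b ^ 4 := by
      rw [← cosh_sq']
      nlinarith [mul_le_mul hsc hsc (by positivity) (by positivity)]
    nlinarith [sq_nonneg (sinh b), pow_nonneg hb0 4, pow_nonneg hb0 8, pow_nonneg hb0 6]
  have hG := three_mul_mul_cosh_le_mul_sinh hd
  have hsum : cosh (b + (b + d)) = cosh d + 2 * sinh b ^ 2 * cosh d
      + 2 * (sinh b * cosh b) * sinh d := by
    rw [show b + (b + d) = d + 2 * b by ring, cosh_add, cosh_two_mul, sinh_two_mul, cosh_sq']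
    ring
  rw [hsum]
  have hbd : 0 ≤ 2 * μ * b * (b + d) := by positivity
  -- `2 d b² cosh d` is absorbed by `three_mul_mul_cosh_le_mul_sinh`, `2 d b⁴ cosh d` by `hμb`.
  nlinarith [mul_le_mul_of_nonneg_left hcosh hd, mul_le_mul_of_nonneg_left hsinh hbd,
    mul_le_mul_of_nonneg_left hsc (by positivity : 0 ≤ 2 * d * sinh d),
    mul_le_mul_of_nonneg_left hsq (by positivity : 0 ≤ 2 * d * cosh d),
    mul_le_mul_of_nonneg_left hμb (by positivity : 0 ≤ 2 * b ^ 2 * d * cosh d),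
    mul_le_mul_of_nonneg_left hG (by positivity : 0 ≤ 2 / 3 * b ^ 2),
    mul_le_mul_of_nonneg_left hμb' (by positivity : 0 ≤ d ^ 2 * sinh d),
    mul_le_mul_of_nonneg_left hμ1 (by positivity : 0 ≤ 2 * b ^ 2 * sinh d),
    (by positivity : 0 ≤ 2 * μ * (μ - 1) * b * d ^ 2 * cosh d)]

lemma abs_sub_mul_cosh_add_le (hb0 : 0 ≤ b) (hb : b ≤ 1 / 2) (hc : 0 ≤ c) (hμ0 : 0 ≤ μ)
    (hμ : μ ^ 2 = 1 + 2 * b ^ 2) :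
    |c - b| * cosh (b + c)
      ≤ |c - b| * cosh (μ * |c - b|) + 2 * μ * b * c * sinh (μ * |c - b|) := by
  rcases le_total c b with hcb | hbc
  · rw [abs_of_nonpos (sub_nonpos.2 hcb), neg_sub]
    exact sub_mul_cosh_add_le_of_le hc hcb hb hμ0 hμ
  · rw [abs_of_nonneg (sub_nonneg.2 hbc)]
    exact sub_mul_cosh_add_le_of_ge hb0 hb hbc hμ0 hμ

lemma cosh_le_cosh_mul_of_cosh_eq_convex_combination {a ā θ : ℝ} (hb0 : 0 ≤ b) (hb : b ≤ 1 / 2)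
    (hc : 0 ≤ c) (hθ0 : 0 ≤ θ) (hθ1 : θ ≤ 1) (hμ0 : 0 ≤ μ) (hμ : μ ^ 2 = 1 + 2 * b ^ 2)
    (ha : cosh a = (1 - θ) * cosh (c - b) + θ * cosh (b + c))
    (hā : ā ^ 2 = (1 - θ) * (c - b) ^ 2 + θ * (b + c) ^ 2) : cosh a ≤ cosh (μ * ā) := by
  have hμ1 : 1 ≤ μ := by nlinarith
  rw [← cosh_abs (c - b)] at ha
  rcases (abs_nonneg (c - b)).eq_or_lt with hd0 | hd0
  · obtain rfl : c = b := by linarith [abs_eq_zero.1 hd0.symm]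
    have hsb : sinh c ≤ μ * c := sinh_le_mul hc hb hμ0 hμ.ge
    rw [← hd0, cosh_zero, ← two_mul, cosh_two_mul, cosh_sq'] at ha
    have := one_add_sq_div_two_le_cosh (μ * ā)
    nlinarith [mul_le_mul hsb hsb (sinh_nonneg_iff.2 hc) (by positivity)]
  · have hW := abs_sub_mul_cosh_add_le hb0 hb hc hμ0 hμ
    have hā' : ā ^ 2 = |c - b| ^ 2 + 4 * θ * b * c := by rw [hā, sq_abs]; ring
    generalize |c - b| = d at hd0 ha hā' hW
    have hmono : cosh d ≤ cosh (μ * d) := by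
      rw [cosh_le_cosh, abs_of_nonneg hd0.le, abs_of_nonneg (by positivity)]
      exact le_mul_of_one_le_left hd0.le hμ1
    have hT := sq_sub_sq_mul_sinh_le (y := μ * ā) (by positivity : 0 < μ * d)
      (by rw [mul_pow, mul_pow, hā']; nlinarith [mul_nonneg (mul_nonneg hθ0 hb0) hc])
    have hT' : 2 * θ * μ * b * c * sinh (μ * d) ≤ d * (cosh (μ * ā) - cosh (μ * d)) := by
      rw [mul_pow, mul_pow, hā'] at hT
      nlinarith
    have : d * cosh a ≤ d * cosh (μ * ā) := by
      rw [ha]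
      nlinarith [mul_le_mul_of_nonneg_left hmono (by nlinarith : 0 ≤ (1 - θ) * d),
        mul_le_mul_of_nonneg_left hW hθ0]
    exact le_of_mul_le_mul_left this hd0

end Distortion

theorem hyperbolic_distortion_curvature_neg_one {a b c A ā : ℝ} (hb0 : 0 ≤ b) (hb : b ≤ 1 / 2)
    (hc : 0 ≤ c) (hlaw : cosh a = cosh b * cosh c - sinh b * sinh c * cos A)
    (hā : ā ^ 2 = b ^ 2 + c ^ 2 - 2 * b * c * cos A) :
    ā ^ 2 ≤ a ^ 2 ∧ a ^ 2 ≤ (1 + 2 * b ^ 2) * ā ^ 2 := by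
  set θ := (1 - cos A) / 2 with hθ
  have hθ0 : 0 ≤ θ := by rw [hθ]; linarith [cos_le_one A]
  have hθ1 : θ ≤ 1 := by rw [hθ]; linarith [neg_one_le_cos A]
  have ha : cosh a = (1 - θ) * cosh (c - b) + θ * cosh (b + c) := by
    rw [hlaw, cosh_sub, cosh_add]; ring
  have hā' : ā ^ 2 = (1 - θ) * (c - b) ^ 2 + θ * (b + c) ^ 2 := by rw [hā]; ring
  refine ⟨sq_le_sq_of_cosh_eq_convex_combination hθ0 hθ1 ha hā', ?_⟩
  have hμ0 : 0 ≤ √(1 + 2 * b ^ 2) := sqrt_nonneg _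
  have hμ : √(1 + 2 * b ^ 2) ^ 2 = 1 + 2 * b ^ 2 := sq_sqrt (by positivity)
  have h := cosh_le_cosh_mul_of_cosh_eq_convex_combination hb0 hb hc hθ0 hθ1 hμ0 hμ ha hā'
  rw [← hμ, ← mul_pow]
  exact sq_le_sq.2 (cosh_le_cosh.1 h)

theorem hyperbolic_distortion_curvature_K_general
    (K a b c A : ℝ) (hK : 0 < K)
    (hb : 0 ≤ b) (hc : 0 ≤ c)
    (hlaw : Real.cosh (Real.sqrt K * a)
        = Real.cosh (Real.sqrt K * b) * Real.cosh (Real.sqrt K * c)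
          - Real.sinh (Real.sqrt K * b) * Real.sinh (Real.sqrt K * c)
              * Real.cos A)
    (hb4 : b ≤ 1 / (4 * Real.sqrt K))
    (abar : ℝ)
    (habar2 : abar ^ 2 = b ^ 2 + c ^ 2 - 2 * b * c * Real.cos A) :
    abar ^ 2 ≤ a ^ 2 ∧ a ^ 2 ≤ (1 + 2 * K * b ^ 2) * abar ^ 2 := by
  have hk : 0 < √K := sqrt_pos.2 hK
  have hkK : √K ^ 2 = K := sq_sqrt hK.le
  have hkb : √K * b ≤ 1 / 2 := by
    have h : √K * (1 / (4 * √K)) = 1 / 4 := by field_simp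
    linarith [mul_le_mul_of_nonneg_left hb4 hk.le]
  have hā : (√K * abar) ^ 2
      = (√K * b) ^ 2 + (√K * c) ^ 2 - 2 * (√K * b) * (√K * c) * cos A := by
    simp only [mul_pow, hkK]
    linear_combination K * habar2 + 2 * b * c * cos A * hkK
  obtain ⟨hlow, hup⟩ :=
    hyperbolic_distortion_curvature_neg_one (mul_nonneg hk.le hb) hkb (mul_nonneg hk.le hc) hlaw hā
  simp only [mul_pow, hkK] at hlow hup
  refine ⟨le_of_mul_le_mul_left hlow hK, le_of_mul_le_mul_left ?_ hK⟩
  linarith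

theorem hyperbolic_distortion_curvature_K
    (K a b c A : ℝ) (hK : 0 < K)
    (ha : 0 ≤ a) (hb : 0 ≤ b) (hc : 0 ≤ c)
    (hA : A ∈ Set.Icc (0 : ℝ) Real.pi)
    (hlaw : Real.cosh (Real.sqrt K * a)
        = Real.cosh (Real.sqrt K * b) * Real.cosh (Real.sqrt K * c)
          - Real.sinh (Real.sqrt K * b) * Real.sinh (Real.sqrt K * c)
              * Real.cos A)
    (hb4 : b ≤ 1 / (4 * Real.sqrt K))
    (abar : ℝ) (habar : 0 ≤ abar)
    (habar2 : abar ^ 2 = b ^ 2 + c ^ 2 - 2 * b * c * Real.cos A) :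
    abar ^ 2 ≤ a ^ 2 ∧ a ^ 2 ≤ (1 + 2 * K * b ^ 2) * abar ^ 2 :=
  hyperbolic_distortion_curvature_K_general K a b c A hK hb hc hlaw hb4 abar habar2
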